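/- Let p ∈ [2,∞) and A, B ∈ M_n(ℂ). Then w_p([[A, B],[B, A]]) ≤ 2^{1 - 2/p}( w_p(A+B)^p + w_p(A-B)^p )^{1/p}, and if A and B are Hermitian then w_p([[A, B],[B, A]]) = ( w_p(A+B)^p + w_p(A-B)^p )^{1/p}. -/

import Mathlib

open Matrix
open scoped ComplexOrder

variable {n : Type*} [Fintype n] [DecidableEq n]

/-- Real part of a matrix: `Re(B) = (B + Bᴴ)/2`. -/
noncomputable def matRe (B : Matrix n n ℂ) : Matrix n n ℂ := (1/2 : ℂ) • (B + Bᴴ)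

/-- Generalized numerical radius associated to a norm-like function `N`. -/
noncomputable def wN (N : Matrix n n ℂ → ℝ) (A : Matrix n n ℂ) : ℝ :=
  ⨆ θ : ℝ, N (matRe (Complex.exp (θ * Complex.I) • A))

/-- `N` is unitarily invariant. -/
def UnitarilyInvariant (N : Matrix n n ℂ → ℝ) : Prop :=
  ∀ (U V : Matrix.unitaryGroup n ℂ) (A : Matrix n n ℂ), N ((U : Matrix n n ℂ) * A * (V : Matrix n n ℂ)) = N A

/-- Real power of a positive definite matrix via spectral decomposition. -/
noncomputable def rpowM {A : Matrix n n ℂ} (hA : A.PosDef) (t : ℝ) : Matrix n n ℂ :=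
  (hA.1.eigenvectorUnitary : Matrix n n ℂ) *
    Matrix.diagonal (fun i => ((hA.1.eigenvalues i ^ t : ℝ) : ℂ)) *
    (hA.1.eigenvectorUnitary : Matrix n n ℂ)ᴴ

/-- Schatten `p`-norm of a matrix, via its singular values. -/
noncomputable def schatten (p : ℝ) (A : Matrix n n ℂ) : ℝ :=
  (∑ i, Real.sqrt ((Matrix.posSemidef_conjTranspose_mul_self A).1.eigenvalues i) ^ p) ^ (1/p)

/-- Schatten `p` generalized numerical radius. -/
noncomputable def wp (p : ℝ) (A : Matrix n n ℂ) : ℝ := wN (schatten p) A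

/-! For each `θ`, the real part of `e^{iθ} [[A, B], [B, A]]` is `[[X, Y], [Y, X]]` with
`X = Re(e^{iθ} A)` and `Y = Re(e^{iθ} B)`. The unitary `(1/√2) [[1, 1], [1, -1]]` conjugates it to
`diag(X + Y, X - Y)`, so its Schatten `p`-th power is the sum of those of `Re(e^{iθ}(A ± B))`.
A supremum of such sums is at most the sum of the suprema, and `2^{1-2/p} ≥ 1`. When `A` and `B`
are Hermitian, so are the block matrix and `A ± B`; since `Re(e^{iθ} H) = cos θ • H`, on Hermitian
matrices `w_p` is just the Schatten norm, and the same identity becomes the equality. -/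

open Polynomial

lemma schatten_eq_sum_roots (p : ℝ) (A : Matrix n n ℂ) :
    schatten p A = ((Aᴴ * A).charpoly.roots.map fun z => √z.re ^ p).sum ^ (1 / p) := by
  rw [(posSemidef_conjTranspose_mul_self A).1.roots_charpoly_eq_eigenvalues, Multiset.map_map]
  rfl

lemma schatten_eq_of_charpoly_eq {l : Type*} [Fintype l] [DecidableEq l] (p : ℝ)
    {A : Matrix n n ℂ} {B : Matrix l l ℂ} (h : (Aᴴ * A).charpoly = (Bᴴ * B).charpoly) :
    schatten p A = schatten p B := by
  rw [schatten_eq_sum_roots, schatten_eq_sum_roots, h]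

lemma schatten_nonneg (p : ℝ) (A : Matrix n n ℂ) : 0 ≤ schatten p A :=
  Real.rpow_nonneg (Finset.sum_nonneg fun _ _ => Real.rpow_nonneg (Real.sqrt_nonneg _) _) _

lemma schatten_rpow {p : ℝ} (hp : p ≠ 0) (A : Matrix n n ℂ) :
    schatten p A ^ p = ((Aᴴ * A).charpoly.roots.map fun z => √z.re ^ p).sum := by
  rw [schatten_eq_sum_roots, ← Real.rpow_mul, one_div_mul_cancel hp, Real.rpow_one]
  exact Multiset.sum_nonneg fun _ h => by
    obtain ⟨z, -, rfl⟩ := Multiset.mem_map.mp h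
    positivity

theorem schatten_unitarilyInvariant (p : ℝ) : UnitarilyInvariant (schatten (n := n) p) := by
  intro U V A
  apply schatten_eq_of_charpoly_eq
  have hU : (U : Matrix n n ℂ)ᴴ * U = 1 := (mem_unitaryGroup_iff').mp U.2
  have hV : (V : Matrix n n ℂ) * (V : Matrix n n ℂ)ᴴ = 1 := (mem_unitaryGroup_iff).mp V.2
  calc ((U * A * V : Matrix n n ℂ)ᴴ * (U * A * V)).charpoly
      = ((V : Matrix n n ℂ)ᴴ * (Aᴴ * A * V)).charpoly := by
        simp only [conjTranspose_mul, Matrix.mul_assoc, ← Matrix.mul_assoc (Uᴴ : Matrix n n ℂ), hU,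
          Matrix.one_mul]
    _ = (Aᴴ * A).charpoly := by
        rw [charpoly_mul_comm, Matrix.mul_assoc, hV, Matrix.mul_one]

lemma schatten_fromBlocks_zero_rpow {l : Type*} [Fintype l] [DecidableEq l] {p : ℝ} (hp : p ≠ 0)
    (P : Matrix l l ℂ) (Q : Matrix n n ℂ) :
    schatten p (fromBlocks P 0 0 Q) ^ p = schatten p P ^ p + schatten p Q ^ p := by
  have hgram : (fromBlocks P 0 0 Q)ᴴ * fromBlocks P 0 0 Q = fromBlocks (Pᴴ * P) 0 0 (Qᴴ * Q) := by
    simp [fromBlocks_conjTranspose, fromBlocks_multiply]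
  rw [schatten_rpow hp, schatten_rpow hp, schatten_rpow hp, hgram, charpoly_fromBlocks_zero₁₂,
    roots_mul ((charpoly_monic _).mul (charpoly_monic _)).ne_zero, Multiset.map_add,
    Multiset.sum_add]

lemma Matrix.IsHermitian.charpoly_real_smul {H : Matrix n n ℂ} (hH : H.IsHermitian) (r : ℝ) :
    ((r : ℂ) • H).charpoly = ∏ i, (X - C ((r * hH.eigenvalues i : ℝ) : ℂ)) := by
  conv_lhs => rw [hH.spectral_theorem, Unitary.conjStarAlgAut_apply, ← smul_mul_assoc,
    ← mul_smul_comm, charpoly_mul_comm, ← Matrix.mul_assoc]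
  simp [← diagonal_smul, charpoly_diagonal]

lemma Matrix.IsHermitian.roots_charpoly_real_smul {H : Matrix n n ℂ} (hH : H.IsHermitian) (r : ℝ) :
    ((r : ℂ) • H).charpoly.roots =
      Multiset.map (fun i => ((r * hH.eigenvalues i : ℝ) : ℂ)) Finset.univ.val := by
  rw [hH.charpoly_real_smul,
    roots_prod _ _ (Finset.prod_ne_zero_iff.mpr fun _ _ => X_sub_C_ne_zero _)]
  simp only [roots_X_sub_C, Multiset.bind_singleton]

lemma schatten_real_smul {p : ℝ} (hp : p ≠ 0) (r : ℝ) (A : Matrix n n ℂ) :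
    schatten p ((r : ℂ) • A) = |r| * schatten p A := by
  have hgram : ((r : ℂ) • A)ᴴ * ((r : ℂ) • A) = ((r ^ 2 : ℝ) : ℂ) • (Aᴴ * A) := by
    simp only [conjTranspose_smul, Complex.star_def, Complex.conj_ofReal, smul_mul_smul_comm]
    push_cast; ring_nf
  have hG := (posSemidef_conjTranspose_mul_self A).1
  rw [schatten_eq_sum_roots, hgram, hG.roots_charpoly_real_smul, Multiset.map_map]
  change (∑ i, √((r ^ 2 * hG.eigenvalues i : ℝ) : ℂ).re ^ p) ^ (1 / p) =
    |r| * (∑ i, √(hG.eigenvalues i) ^ p) ^ (1 / p)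
  simp_rw [Complex.ofReal_re, Real.sqrt_mul (sq_nonneg r), Real.sqrt_sq_eq_abs,
    Real.mul_rpow (abs_nonneg r) (Real.sqrt_nonneg _), ← Finset.mul_sum]
  rw [Real.mul_rpow (by positivity) (by positivity), ← Real.rpow_mul (abs_nonneg r),
    mul_one_div_cancel hp, Real.rpow_one]

lemma fromBlocks_hadamard_mul_self :
    (fromBlocks 1 1 1 (-1) : Matrix (n ⊕ n) (n ⊕ n) ℂ) * fromBlocks 1 1 1 (-1) = (2 : ℂ) • 1 := by
  rw [fromBlocks_multiply, ← fromBlocks_one, fromBlocks_smul]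
  simp [two_smul]

lemma fromBlocks_hadamard_conj (X Y : Matrix n n ℂ) :
    (fromBlocks 1 1 1 (-1) : Matrix (n ⊕ n) (n ⊕ n) ℂ) * fromBlocks X Y Y X *
      fromBlocks 1 1 1 (-1) = (2 : ℂ) • fromBlocks (X + Y) 0 0 (X - Y) := by
  simp only [fromBlocks_multiply, fromBlocks_smul]
  congr 1 <;> simp <;> module

lemma schatten_fromBlocks_self {p : ℝ} (hp : p ≠ 0) (X Y : Matrix n n ℂ) :
    schatten p (fromBlocks X Y Y X) =
      (schatten p (X + Y) ^ p + schatten p (X - Y) ^ p) ^ (1 / p) := by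
  set c : ℂ := (((√2)⁻¹ : ℝ) : ℂ)
  have hc : c * c * 2 = 1 := by
    simp only [c]
    norm_cast
    field_simp
    simp
  let U : Matrix (n ⊕ n) (n ⊕ n) ℂ := c • fromBlocks 1 1 1 (-1)
  have hUstar : star U = U := by
    simp [U, c, star_smul, star_eq_conjTranspose, fromBlocks_conjTranspose]
  have hU : U ∈ unitaryGroup (n ⊕ n) ℂ := by
    rw [mem_unitaryGroup_iff, hUstar]
    simp only [U, smul_mul_smul_comm, fromBlocks_hadamard_mul_self, smul_smul, hc, one_smul]
  have hdiag : U * fromBlocks X Y Y X * U = fromBlocks (X + Y) 0 0 (X - Y) := by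
    simp only [U, smul_mul_assoc, mul_smul_comm, fromBlocks_hadamard_conj, smul_smul]
    rw [← mul_assoc, hc, one_smul]
  rw [← schatten_unitarilyInvariant p ⟨U, hU⟩ ⟨U, hU⟩, hdiag, ← schatten_fromBlocks_zero_rpow hp,
    one_div, Real.rpow_rpow_inv (schatten_nonneg _ _) hp]

/-- No boundedness hypothesis is needed: if the left-hand side is unbounded, the real `⨆` is
the junk value `0`. -/
lemma Real.ciSup_rpow_add_rpow_le {ι : Type*} {f g : ι → ℝ} (hf : ∀ i, 0 ≤ f i)
    (hg : ∀ i, 0 ≤ g i) {p : ℝ} (hp : 0 < p) :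
    ⨆ i, (f i ^ p + g i ^ p) ^ (1 / p) ≤ ((⨆ i, f i) ^ p + (⨆ i, g i) ^ p) ^ (1 / p) := by
  have hrhs : 0 ≤ ((⨆ i, f i) ^ p + (⨆ i, g i) ^ p) ^ (1 / p) := by
    have := Real.iSup_nonneg hf
    have := Real.iSup_nonneg hg
    positivity
  have le_left : ∀ x y : ℝ, 0 ≤ x → 0 ≤ y → x ≤ (x ^ p + y ^ p) ^ (1 / p) := fun x y hx hy => by
    calc _ = (x ^ p) ^ (1 / p) := by rw [one_div, Real.rpow_rpow_inv hx hp.ne']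
      _ ≤ _ := by gcongr; exact le_add_of_nonneg_right (by positivity)
  by_cases hbdd : BddAbove (Set.range fun i => (f i ^ p + g i ^ p) ^ (1 / p))
  · have hfb := BddAbove.range_mono _ (fun i => le_left _ _ (hf i) (hg i)) hbdd
    have hgb := BddAbove.range_mono _
      (fun i => (le_left _ _ (hg i) (hf i)).trans_eq (by rw [add_comm])) hbdd
    refine Real.iSup_le (fun i => Real.rpow_le_rpow (by have := hf i; have := hg i; positivity)
      (add_le_add ?_ ?_) (by positivity)) hrhs
    · exact Real.rpow_le_rpow (hf i) (le_ciSup hfb i) hp.le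
    · exact Real.rpow_le_rpow (hg i) (le_ciSup hgb i) hp.le
  · rw [Real.iSup_of_not_bddAbove hbdd]
    exact hrhs

section MatRe

variable {m : Type*}

lemma matRe_add (A B : Matrix m m ℂ) : matRe (A + B) = matRe A + matRe B := by
  simp only [matRe, conjTranspose_add]
  module

lemma matRe_sub (A B : Matrix m m ℂ) : matRe (A - B) = matRe A - matRe B := by
  simp only [matRe, conjTranspose_sub]
  module

lemma matRe_fromBlocks (A B : Matrix m m ℂ) :
    matRe (fromBlocks A B B A) = fromBlocks (matRe A) (matRe B) (matRe B) (matRe A) := by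
  rw [matRe, fromBlocks_conjTranspose, fromBlocks_add, fromBlocks_smul]
  rfl

lemma matRe_smul_of_isHermitian (c : ℂ) {H : Matrix m m ℂ} (hH : H.IsHermitian) :
    matRe (c • H) = (c.re : ℂ) • H := by
  rw [matRe, conjTranspose_smul, hH.eq, ← add_smul, smul_smul, Complex.star_def,
    Complex.add_conj]
  congr 1
  push_cast
  ring

lemma wN_of_isHermitian {N : Matrix m m ℂ → ℝ} (hN : ∀ (r : ℝ) M, N ((r : ℂ) • M) = |r| * N M)
    {H : Matrix m m ℂ} (hH : H.IsHermitian) (hH0 : 0 ≤ N H) : wN N H = N H := by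
  simp only [wN, matRe_smul_of_isHermitian _ hH, Complex.exp_ofReal_mul_I_re, hN]
  have hle : ∀ θ, |Real.cos θ| * N H ≤ N H := fun θ =>
    mul_le_of_le_one_left hH0 (Real.abs_cos_le_one θ)
  exact le_antisymm (Real.iSup_le hle hH0)
    (le_ciSup_of_le ⟨_, Set.forall_mem_range.2 hle⟩ 0 (by simp))

end MatRe

lemma wp_nonneg (p : ℝ) (A : Matrix n n ℂ) : 0 ≤ wp p A :=
  Real.iSup_nonneg fun _ => schatten_nonneg _ _

lemma wp_of_isHermitian {p : ℝ} (hp : p ≠ 0) {H : Matrix n n ℂ} (hH : H.IsHermitian) :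
    wp p H = schatten p H :=
  wN_of_isHermitian (schatten_real_smul hp) hH (schatten_nonneg p H)

lemma wp_fromBlocks_self {p : ℝ} (hp : p ≠ 0) (A B : Matrix n n ℂ) :
    wp p (fromBlocks A B B A) = ⨆ θ : ℝ,
      (schatten p (matRe (Complex.exp (θ * Complex.I) • (A + B))) ^ p +
        schatten p (matRe (Complex.exp (θ * Complex.I) • (A - B))) ^ p) ^ (1 / p) := by
  refine congrArg iSup (funext fun θ => ?_)
  rw [fromBlocks_smul, matRe_fromBlocks, schatten_fromBlocks_self hp, ← matRe_add, ← matRe_sub,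
    ← smul_add, ← smul_sub]

theorem wp_block_ABBA (A B : Matrix n n ℂ) {p : ℝ} (hp : 2 ≤ p) :
    wp p (Matrix.fromBlocks A B B A) ≤
      2 ^ (1 - 2/p) * (wp p (A + B) ^ p + wp p (A - B) ^ p) ^ (1/p) ∧
    (A.IsHermitian → B.IsHermitian →
      wp p (Matrix.fromBlocks A B B A) = (wp p (A + B) ^ p + wp p (A - B) ^ p) ^ (1/p)) := by
  have hp0 : 0 < p := by linarith
  refine ⟨?_, fun hA hB => ?_⟩
  · have hconst : (1 : ℝ) ≤ 2 ^ (1 - 2 / p) :=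
      Real.one_le_rpow one_le_two (sub_nonneg.2 ((div_le_one hp0).2 hp))
    have h0 : 0 ≤ (wp p (A + B) ^ p + wp p (A - B) ^ p) ^ (1 / p) :=
      Real.rpow_nonneg (add_nonneg (Real.rpow_nonneg (wp_nonneg p _) _)
        (Real.rpow_nonneg (wp_nonneg p _) _)) _
    refine le_trans ?_ (le_mul_of_one_le_left h0 hconst)
    rw [wp_fromBlocks_self hp0.ne']
    exact Real.ciSup_rpow_add_rpow_le (fun _ => schatten_nonneg _ _)
      (fun _ => schatten_nonneg _ _) hp0
  · rw [wp_of_isHermitian hp0.ne' (hA.fromBlocks hB.eq hA), wp_of_isHermitian hp0.ne' (hA.add hB),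
      wp_of_isHermitian hp0.ne' (hA.sub hB), schatten_fromBlocks_self hp0.ne']
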